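/- Let a₁, a₂, a₃, a₄, a₅, a₆, a₇ be real constants with a₁ ≠ 0, a₂ ≠ 0, a₅ ≠ 0 and a₃ = a₁ + 1, and let H, L be positive real numbers with H^{a₃+a₄} ≠ L^{a₃+a₄}. Then the quadruple (H, L, A, B) of real numbers satisfies the Dixit–Pindyck system: a₅ H + B H^{−a₁} − A H^{a₂} − a₆ = 0, −a₁ B H^{−a₃} − a₂ A H^{a₄} + a₅ = 0, a₅ L + B L^{−a₁} − A L^{a₂} − a₇ = 0, −a₁ B L^{−a₃} − a₂ A L^{a₄} + a₅ = 0, if and only if: (i) A = a₅ (H^{a₃} − L^{a₃}) / (a₂ (H^{a₃+a₄} − L^{a₃+a₄})) and B = a₅ (H·L)^{a₃} (H^{a₄} − L^{a₄}) / (a₁ (H^{a₃+a₄} − L^{a₃+a₄})), and (ii) the pair (H, L) satisfies the reduced two-variable system H = a₆/a₅ − ( a₁ H^{a₂} (L^{a₃} − H^{a₃}) + a₂ H L^{a₃} (H^{a₄} − L^{a₄}) ) / ( a₁ a₂ (H^{a₃+a₄} − L^{a₃+a₄}) ) and L = a₇/a₅ − ( a₁ L^{a₂} (L^{a₃} − H^{a₃})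 + a₂ H^{a₃} L (H^{a₄} − L^{a₄}) ) / ( a₁ a₂ (H^{a₃+a₄} − L^{a₃+a₄}) ). -/

import Mathlib

/-!
The two smooth-pasting equations are linear in `(A, B)`, and Cramer's rule solves them, the
determinant being a nonzero multiple of `H ^ (a₃ + a₄) - L ^ (a₃ + a₄)`. Substituting this
solution into the two value-matching equations leaves the reduced system in `(H, L)`.
Since `a₃ = a₁ + 1` we have `H ^ (-a₁) = H * (H ^ a₃)⁻¹`, so every power in the system is
expressed through `H ^ a₃`, `H ^ a₄`, `L ^ a₃`, `L ^ a₄` and the computation is rational.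
-/

open Real

theorem rpow_neg_eq_mul_inv_rpow_add_one {x : ℝ} (hx : 0 < x) (a : ℝ) :
    x ^ (-a) = x * (x ^ (a + 1))⁻¹ := by
  rw [rpow_add hx, rpow_one, rpow_neg hx.le]
  field_simp

section

variable {a₁ a₂ a₅ P Q R S A B : ℝ}

theorem smooth_pasting_iff (ha₁ : a₁ ≠ 0) (ha₂ : a₂ ≠ 0) (hP : P ≠ 0) (hR : R ≠ 0)
    (hD : P * Q - R * S ≠ 0) :
    (-a₁ * B * P⁻¹ - a₂ * A * Q + a₅ = 0 ∧ -a₁ * B * R⁻¹ - a₂ * A * S + a₅ = 0) ↔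
      (A = a₅ * (P - R) / (a₂ * (P * Q - R * S)) ∧
        B = a₅ * (P * R) * (Q - S) / (a₁ * (P * Q - R * S))) := by
  constructor
  · rintro ⟨eP, eR⟩
    field_simp at eP eR
    constructor
    · field_simp
      linear_combination eR - eP
    · field_simp
      linear_combination S * R * eP - Q * P * eR
  · rintro ⟨rfl, rfl⟩
    constructor <;> field_simp <;> ring

theorem value_matching_iff {Z W D z u c : ℝ} (ha₁ : a₁ ≠ 0) (ha₂ : a₂ ≠ 0) (ha₅ : a₅ ≠ 0)
    (hZ : Z ≠ 0) (hA : A = a₅ * (P - R) / (a₂ * D))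
    (hB : B = a₅ * (Z * W) * (Q - S) / (a₁ * D)) :
    a₅ * z + B * (z * Z⁻¹) - A * u - c = 0 ↔
      z = c / a₅ - (a₁ * u * (R - P) + a₂ * z * W * (Q - S)) / (a₁ * a₂ * D) := by
  subst hA hB
  rw [eq_sub_iff_add_eq, eq_div_iff ha₅]
  field_simp
  constructor <;> intro h <;> linear_combination h

end

/-- Equivalence between the four-equation Dixit–Pindyck system
in `(H, L, A, B)` and the reduced two-variable system in `(H, L)` together with
the explicit formulas recovering `A` and `B`. -/
theorem dixit_pindyck_system_reduction
    (a₁ a₂ a₃ a₄ a₅ a₆ a₇ : ℝ) (ha₁ : a₁ ≠ 0) (ha₂ : a₂ ≠ 0) (ha₅ : a₅ ≠ 0)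
    (ha₃ : a₃ = a₁ + 1)
    (H L : ℝ) (hH : 0 < H) (hL : 0 < L)
    (hHL : H ^ (a₃ + a₄) ≠ L ^ (a₃ + a₄))
    (A B : ℝ) :
    (a₅ * H + B * H ^ (-a₁) - A * H ^ a₂ - a₆ = 0 ∧
     -a₁ * B * H ^ (-a₃) - a₂ * A * H ^ a₄ + a₅ = 0 ∧
     a₅ * L + B * L ^ (-a₁) - A * L ^ a₂ - a₇ = 0 ∧
     -a₁ * B * L ^ (-a₃) - a₂ * A * L ^ a₄ + a₅ = 0)
    ↔
    ((A = a₅ * (H ^ a₃ - L ^ a₃) / (a₂ * (H ^ (a₃ + a₄) - L ^ (a₃ + a₄))) ∧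
      B = a₅ * (H * L) ^ a₃ * (H ^ a₄ - L ^ a₄) /
            (a₁ * (H ^ (a₃ + a₄) - L ^ (a₃ + a₄)))) ∧
     (H = a₆ / a₅ -
        (a₁ * H ^ a₂ * (L ^ a₃ - H ^ a₃) + a₂ * H * L ^ a₃ * (H ^ a₄ - L ^ a₄)) /
          (a₁ * a₂ * (H ^ (a₃ + a₄) - L ^ (a₃ + a₄))) ∧
      L = a₇ / a₅ -
        (a₁ * L ^ a₂ * (L ^ a₃ - H ^ a₃) + a₂ * H ^ a₃ * L * (H ^ a₄ - L ^ a₄)) /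
          (a₁ * a₂ * (H ^ (a₃ + a₄) - L ^ (a₃ + a₄))))) := by
  subst ha₃
  rw [rpow_add hH (a₁ + 1), rpow_add hL (a₁ + 1), mul_rpow hH.le hL.le] at *
  rw [rpow_neg_eq_mul_inv_rpow_add_one hH, rpow_neg_eq_mul_inv_rpow_add_one hL,
    rpow_neg hH.le, rpow_neg hL.le]
  have hD := sub_ne_zero.mpr hHL
  have hP := (rpow_pos_of_pos hH (a₁ + 1)).ne'
  have hR := (rpow_pos_of_pos hL (a₁ + 1)).ne'
  rw [← and_assoc, and_and_and_comm, and_comm, smooth_pasting_iff ha₁ ha₂ hP hR hD]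
  refine and_congr_right fun ⟨hA, hB⟩ => and_congr ?_ ?_
  · exact value_matching_iff ha₁ ha₂ ha₅ hP hA hB
  · rw [← mul_right_comm a₂ L]
    exact value_matching_iff ha₁ ha₂ ha₅ hR hA (hB.trans (by ring))
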